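/- arXiv:2206.01489 — 15 statements merged into one kernel-verified Lean document; each statement's English description precedes it below -/
import Mathlib

section
/- Let R be a commutative ring and M a multiplication R-module (i.e., every submodule N of M has the form N = I • M for some ideal I of R). If M = I • M for some ideal I contained in the Jacobson radical of R, then M = 0. -/
/-- `M` is a multiplication `R`-module if every submodule `N` of `M` has the form
`N = I • M` for some ideal `I` of `R`. -/
def IsMultiplicationModule (R : Type*) [CommRing R] (M : Type*) [AddCommGroup M]
    [Module R M] : Prop :=
  ∀ N : Submodule R M, ∃ I : Ideal R, N = I • (⊤ : Submodule R M)

theorem stmt_0 (R : Type*) [CommRing R] (M : Type*) [AddCommGroup M] [Module R M]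
    (hM : IsMultiplicationModule R M) (I : Ideal R)
    (hI : I ≤ (⊥ : Ideal R).jacobson)
    (h : I • (⊤ : Submodule R M) = ⊤) :
    (⊤ : Submodule R M) = ⊥ := by
  rw [eq_bot_iff]
  intro x _
  obtain ⟨A, hA⟩ := hM (Submodule.span R {x})
  have key : Submodule.span R {x} = I • Submodule.span R {x} := by
    conv_lhs => rw [hA, ← h, ← Submodule.smul_assoc,
      show (A • I : Ideal R) = I • A from mul_comm A I, Submodule.smul_assoc, ← hA]
  have hx : x ∈ I • Submodule.span R {x} := by
    rw [← key]; exact Submodule.mem_span_singleton_self x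
  rw [Submodule.mem_smul_span_singleton] at hx
  obtain ⟨r, hr, hrx⟩ := hx
  have hu : IsUnit (r * (-1) + 1) := (Ideal.mem_jacobson_bot.mp (hI hr)) (-1)
  obtain ⟨u, hu⟩ := hu
  have h0 : (r * (-1) + 1) • x = 0 := by
    rw [add_smul, one_smul, mul_neg_one, neg_smul, hrx, neg_add_cancel]
  have hx0 : x = 0 := by
    calc x = ((↑u⁻¹ : R) * ↑u) • x := by simp
    _ = (↑u⁻¹ : R) • ((↑u : R) • x) := mul_smul _ _ _
    _ = 0 := by rw [hu, h0, smul_zero]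
  simp [hx0]
end

section
/- Let R be a commutative local ring (having exactly one maximal ideal) and M a nonzero multiplication R-module. Then M is cyclic, i.e., M = R • m for some m ∈ M. -/
theorem stmt_1 (R : Type*) [CommRing R] [IsLocalRing R] (M : Type*) [AddCommGroup M]
    [Module R M] [Nontrivial M] (hM : IsMultiplicationModule R M) :
    ∃ m : M, (⊤ : Submodule R M) = Submodule.span R {m} := by
  set 𝔪 := IsLocalRing.maximalIdeal R with h𝔪
  -- Step 1: 𝔪 • ⊤ ≠ ⊤
  have hne : (𝔪 • ⊤ : Submodule R M) ≠ ⊤ := by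
    intro htop
    obtain ⟨x, hx⟩ := exists_ne (0 : M)
    obtain ⟨I, hI⟩ := hM (Submodule.span R {x})
    have hIx : Submodule.span R {x} = 𝔪 • Submodule.span R {x} := by
      calc Submodule.span R {x} = I • (⊤ : Submodule R M) := hI
        _ = I • (𝔪 • (⊤ : Submodule R M)) := by rw [htop]
        _ = 𝔪 • (I • (⊤ : Submodule R M)) := smul_comm I 𝔪 ⊤
        _ = 𝔪 • Submodule.span R {x} := by rw [← hI]
    have hxmem : x ∈ 𝔪 • Submodule.span R {x} := by
      rw [← hIx]; exact Submodule.mem_span_singleton_self x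
    rw [Submodule.mem_smul_span_singleton] at hxmem
    obtain ⟨a, ha, hax⟩ := hxmem
    have hu : IsUnit (1 - a) := IsLocalRing.isUnit_one_sub_self_of_mem_nonunits a ha
    have h0 : (1 - a) • x = 0 := by
      rw [sub_smul, one_smul, hax, sub_self]
    exact hx (by rwa [hu.smul_eq_zero] at h0)
  -- Step 2: pick m ∉ 𝔪 • ⊤
  have : ∃ m : M, m ∉ (𝔪 • ⊤ : Submodule R M) := by
    by_contra h
    push_neg at h
    exact hne (Submodule.eq_top_iff'.2 h)
  obtain ⟨m, hm⟩ := this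
  obtain ⟨I, hI⟩ := hM (Submodule.span R {m})
  have hInot : ¬ I ≤ 𝔪 := by
    intro hle
    apply hm
    have : m ∈ Submodule.span R {m} := Submodule.mem_span_singleton_self m
    rw [hI] at this
    exact Submodule.smul_mono hle le_rfl this
  have hItop : I = ⊤ := by
    by_contra hne'
    exact hInot (IsLocalRing.le_maximalIdeal hne')
  refine ⟨m, ?_⟩
  rw [hI, hItop, Submodule.top_smul]
end

section
/- Let R be a commutative ring and M a faithful multiplication R-module. Then for every nonempty family of ideals (I_λ) of R, one has ⋂_λ (I_λ • M) = (⋂_λ I_λ) • M. -/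
/-- El-Bast–Smith dichotomy: for a multiplication module and a maximal ideal `P`,
either `M` is `P`-torsion or `M` is `P`-cyclic. -/
lemma mult_dichotomy {R : Type*} [CommRing R] {M : Type*} [AddCommGroup M] [Module R M]
    (hM : IsMultiplicationModule R M) (P : Ideal R) (hP : P.IsMaximal) :
    (∀ x : M, ∃ p ∈ P, (1 - p) • x = 0) ∨
      ∃ (m : M) (p : R), p ∈ P ∧ ∀ y : M, ∃ r : R, (1 - p) • y = r • m := by
  by_cases h : ∀ x : M, ∃ p ∈ P, (1 - p) • x = 0
  · exact Or.inl h
  right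
  push_neg at h
  obtain ⟨x, hx⟩ := h
  set S : Set (Ideal R) := {J : Ideal R | ∃ m : M, Submodule.span R {m} = J • ⊤} with hS
  set C : Ideal R := sSup S with hC
  have hxC : x ∈ C • Submodule.span R {x} := by
    obtain ⟨I, hI⟩ := hM (Submodule.span R {x})
    have hle : I • (⊤ : Submodule R M) ≤ C • Submodule.span R {x} := by
      refine Submodule.smul_le.mpr fun a ha m _ => ?_
      obtain ⟨J, hJ⟩ := hM (Submodule.span R {m})
      have hJC : J ≤ C := le_sSup ⟨m, hJ⟩
      have h1 : a • m ∈ I • Submodule.span R {m} :=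
        Submodule.smul_mem_smul ha (Submodule.mem_span_singleton_self m)
      rw [hJ] at h1
      have h2 : a • m ∈ J • (I • (⊤ : Submodule R M)) := by
        rwa [← Submodule.smul_assoc, smul_eq_mul, mul_comm, ← smul_eq_mul,
          Submodule.smul_assoc] at h1
      rw [← hI] at h2
      exact Submodule.smul_mono hJC le_rfl h2
    have hx' : x ∈ I • (⊤ : Submodule R M) := hI ▸ Submodule.mem_span_singleton_self x
    exact hle hx'
  rw [Submodule.mem_smul_span_singleton] at hxC
  obtain ⟨c, hcC, hcx⟩ := hxC
  have hcP : c ∉ P := fun hc => hx c hc (by rw [sub_smul, one_smul, hcx, sub_self])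
  have hCP : ¬C ≤ P := fun hle => hcP (hle hcC)
  have hex : ∃ J ∈ S, ¬J ≤ P := by
    by_contra hcon
    push_neg at hcon
    exact hCP (sSup_le hcon)
  obtain ⟨J, ⟨m, hm⟩, hJP⟩ := hex
  obtain ⟨q, hqJ, hqP⟩ := SetLike.not_le_iff_exists.mp hJP
  obtain ⟨u, i, hiP, hui⟩ := hP.exists_inv hqP
  refine ⟨m, i, hiP, fun y => ?_⟩
  have hqy : q • y ∈ Submodule.span R {m} := by
    rw [hm]; exact Submodule.smul_mem_smul hqJ trivial
  obtain ⟨s, hs⟩ := Submodule.mem_span_singleton.mp hqy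
  refine ⟨u * s, ?_⟩
  have h1i : (1 : R) - i = u * q := by linear_combination -hui
  rw [h1i, mul_smul, ← hs, ← mul_smul]

theorem stmt_3 (R : Type*) [CommRing R] (M : Type*) [AddCommGroup M] [Module R M]
    [FaithfulSMul R M] (hM : IsMultiplicationModule R M)
    {ι : Type*} [Nonempty ι] (I : ι → Ideal R) :
    (⨅ i, (I i) • (⊤ : Submodule R M)) = (⨅ i, I i) • (⊤ : Submodule R M) := by
  refine le_antisymm ?_ (le_iInf fun i => Submodule.smul_mono_left (iInf_le I i))
  intro x hx
  rw [Submodule.mem_iInf] at hx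
  set A : Ideal R := ⨅ i, I i with hA
  set K : Ideal R := Submodule.comap (LinearMap.toSpanSingleton R M x)
    (A • (⊤ : Submodule R M)) with hK
  by_contra hxA
  have hK1 : (1 : R) ∉ K := by
    intro h1
    apply hxA
    simpa using (Submodule.mem_comap.mp h1)
  have hKne : K ≠ ⊤ := fun h => hK1 (h ▸ trivial)
  obtain ⟨P, hPmax, hKP⟩ := Ideal.exists_le_maximal K hKne
  have hmemK : ∀ r : R, r • x ∈ A • (⊤ : Submodule R M) → r ∈ P := fun r hr =>
    hKP (Submodule.mem_comap.mpr (by simpa using hr))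
  rcases mult_dichotomy hM P hPmax with htor | ⟨m, p, hpP, hb⟩
  · obtain ⟨p, hpP, hpx⟩ := htor x
    have : (1 : R) - p ∈ P := hmemK _ (by rw [hpx]; exact Submodule.zero_mem _)
    exact hPmax.ne_top ((Ideal.eq_top_iff_one P).mpr (by simpa using P.add_mem this hpP))
  · -- P-cyclic case
    set f : M →ₗ[R] M := LinearMap.lsmul R M (1 - p) with hf
    have hrange : LinearMap.range f ≤ Submodule.span R {m} := by
      rintro _ ⟨z, rfl⟩
      obtain ⟨r, hr⟩ := hb z
      exact Submodule.mem_span_singleton.mpr ⟨r, hr.symm⟩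
    have hc : ∀ i, ∃ c ∈ I i, c • m = (1 - p) • x := by
      intro i
      have h1 : f x ∈ (I i • (⊤ : Submodule R M)).map f := Submodule.mem_map_of_mem (hx i)
      rw [Submodule.map_smul''] at h1
      have h2 : f x ∈ I i • Submodule.span R {m} := by
        refine Submodule.smul_mono le_rfl ?_ h1
        rw [Submodule.map_top]; exact hrange
      exact Submodule.mem_smul_span_singleton.mp h2
    choose c hcI hcm using hc
    obtain ⟨i₀⟩ := ‹Nonempty ι›
    have key : ∀ i, c i₀ * (1 - p) = c i * (1 - p) := by
      intro i
      apply eq_of_smul_eq_smul (α := M)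
      intro y
      obtain ⟨r, hr⟩ := hb y
      rw [mul_smul, mul_smul, hr, smul_comm (c i₀) r m, smul_comm (c i) r m, hcm i₀, hcm i]
    have hAmem : c i₀ * (1 - p) ∈ A := by
      rw [hA, Ideal.mem_iInf]
      intro i
      rw [key i]
      exact Ideal.mul_mem_right _ _ (hcI i)
    have hsq : ((1 : R) - p) * (1 - p) ∈ P := by
      apply hmemK
      have : ((1 - p) * (1 - p)) • x = (c i₀ * (1 - p)) • m := by
        rw [mul_smul, ← hcm i₀, mul_smul, smul_comm]
      rw [this]
      exact Submodule.smul_mem_smul hAmem trivial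
    have h1p : (1 : R) - p ∈ P :=
      ((hPmax.isPrime.mem_or_mem hsq).elim id id)
    exact hPmax.ne_top ((Ideal.eq_top_iff_one P).mpr (by simpa using P.add_mem h1p hpP))
end

section
/- Let R be a commutative ring and M a faithful multiplication R-module. Define M to be cofinitely generated if whenever a nonempty family of submodules has intersection 0, some finite subfamily already has intersection 0; similarly for R with ideals. Then M is cofinitely generated if and only if R is cofinitely generated. -/
section aux
variable {R : Type*} [CommRing R] {M : Type*} [AddCommGroup M] [Module R M]

/-- Faithfulness: if `I • ⊤ = ⊥` then `I = ⊥`. -/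
lemma ideal_eq_bot_of_smul_top_eq_bot [FaithfulSMul R M] {I : Ideal R}
    (h : I • (⊤ : Submodule R M) = ⊥) : I = ⊥ := by
  ext a
  simp only [Submodule.mem_bot]
  constructor
  · intro ha
    refine FaithfulSMul.eq_of_smul_eq_smul (M := R) (α := M) (fun y => ?_)
    have : a • y ∈ I • (⊤ : Submodule R M) := Submodule.smul_mem_smul ha trivial
    rw [h] at this
    simpa using this
  · rintro rfl; exact I.zero_mem

/-- Key lemma: for a faithful multiplication module, an element lying in `I • ⊤`
for every `I` in a nonempty family lies in `(sInf S) • ⊤`. -/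
lemma key_lemma [FaithfulSMul R M]
    (hM : ∀ N : Submodule R M, ∃ I : Ideal R, N = I • (⊤ : Submodule R M))
    (S : Set (Ideal R)) (hS : S.Nonempty) (x : M)
    (hx : ∀ I ∈ S, x ∈ I • (⊤ : Submodule R M)) :
    x ∈ (sInf S) • (⊤ : Submodule R M) := by
  set A := sInf S with hA
  set J : Ideal R := Submodule.comap (LinearMap.toSpanSingleton R M x)
    (A • (⊤ : Submodule R M)) with hJdef
  have memJ : ∀ r : R, r ∈ J ↔ r • x ∈ A • (⊤ : Submodule R M) := by
    intro r; simp [hJdef, Submodule.mem_comap]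
  by_cases hJ : J = ⊤
  · have h1 : (1 : R) ∈ J := hJ ▸ Submodule.mem_top
    simpa using (memJ 1).mp h1
  obtain ⟨P, hPmax, hJP⟩ := Ideal.exists_le_maximal J hJ
  by_cases hPM : P • (⊤ : Submodule R M) = ⊤
  · -- torsion case
    obtain ⟨I, hI⟩ := hM (Submodule.span R {x})
    have hspan : Submodule.span R ({x} : Set M) = P • Submodule.span R {x} := by
      rw [hI]
      calc I • (⊤ : Submodule R M) = I • (P • (⊤ : Submodule R M)) := by rw [hPM]
        _ = (I • P) • (⊤ : Submodule R M) := (Submodule.smul_assoc I P ⊤).symm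
        _ = (P • I) • (⊤ : Submodule R M) := by
              rw [smul_eq_mul, smul_eq_mul, mul_comm]
        _ = P • (I • (⊤ : Submodule R M)) := Submodule.smul_assoc P I ⊤
    have hxmem : x ∈ P • Submodule.span R ({x} : Set M) := by
      rw [← hspan]; exact Submodule.mem_span_singleton_self x
    obtain ⟨p, hpP, hpx⟩ := Submodule.mem_smul_span_singleton.mp hxmem
    have : (1 - p) ∈ J := by
      rw [memJ, sub_smul, one_smul, hpx, sub_self]
      exact Submodule.zero_mem _
    have h1 : (1 : R) ∈ P := by
      have := P.add_mem (hJP this) hpP; simpa using this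
    exact absurd ((Ideal.eq_top_iff_one P).mpr h1) hPmax.ne_top
  · -- P-cyclic case
    have : ∃ m : M, m ∉ P • (⊤ : Submodule R M) := by
      by_contra h; push_neg at h
      exact hPM (eq_top_iff.mpr fun m _ => h m)
    obtain ⟨m, hm⟩ := this
    obtain ⟨I, hI⟩ := hM (Submodule.span R {m})
    have hIP : ¬ I ≤ P := by
      intro hle
      apply hm
      have : m ∈ I • (⊤ : Submodule R M) := by
        rw [← hI]; exact Submodule.mem_span_singleton_self m
      exact Submodule.smul_mono_left hle this
    obtain ⟨q, hqI, hqP⟩ := SetLike.not_le_iff_exists.mp hIP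
    have hq : ∀ y : M, q • y ∈ Submodule.span R ({m} : Set M) := by
      intro y
      rw [hI]
      exact Submodule.smul_mem_smul hqI trivial
    -- q • x ∈ I' • span {m} for each I' ∈ S
    have hb : ∀ I' ∈ S, ∃ b ∈ I', b • m = q • x := by
      intro I' hI'
      have hmem : q • x ∈ I' • Submodule.span R ({m} : Set M) := by
        have hx' := hx I' hI'
        have hle : I' • (⊤ : Submodule R M) ≤
            Submodule.comap (LinearMap.lsmul R M q) (I' • Submodule.span R ({m} : Set M)) := by
          rw [Submodule.smul_le]
          intro r hr y _
          simp only [Submodule.mem_comap, LinearMap.lsmul_apply]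
          rw [smul_comm q r y]
          exact Submodule.smul_mem_smul hr (hq y)
        have := hle hx'
        simpa using this
      obtain ⟨b, hbI, hbe⟩ := Submodule.mem_smul_span_singleton.mp hmem
      exact ⟨b, hbI, hbe⟩
    obtain ⟨I₀, hI₀⟩ := hS
    obtain ⟨b₀, hb₀I, hb₀⟩ := hb I₀ hI₀
    have hannq : ∀ c : R, c • m = 0 → c * q = 0 := by
      intro c hc
      refine FaithfulSMul.eq_of_smul_eq_smul (M := R) (α := M) (fun y => ?_)
      have hy := hq y
      obtain ⟨r, hr⟩ := Submodule.mem_span_singleton.mp hy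
      have : (c * q) • y = r • (c • m) := by
        rw [mul_smul, ← hr, smul_comm c r]
      rw [this, hc, smul_zero, zero_smul]
    have hqb₀A : q * b₀ ∈ A := by
      rw [hA, Submodule.mem_sInf]
      intro I' hI'
      obtain ⟨b, hbI, hbe⟩ := hb I' hI'
      have hsub : (b₀ - b) • m = 0 := by rw [sub_smul, hb₀, hbe, sub_self]
      have h0 : (b₀ - b) * q = 0 := hannq _ hsub
      have : q * b₀ = q * b := by linear_combination h0
      rw [this]
      exact Ideal.mul_mem_left I' q hbI
    have hq2 : q * q ∈ J := by
      rw [memJ, mul_smul, ← hb₀, ← mul_smul]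
      exact Submodule.smul_mem_smul hqb₀A trivial
    have hq2P : q ^ 2 ∈ P := by rw [sq]; exact hJP hq2
    exact absurd (hPmax.isPrime.mem_of_pow_mem 2 hq2P) hqP
end aux

/-- A module is cofinitely generated if every nonempty family of submodules with
intersection `⊥` admits a finite nonempty subfamily with intersection `⊥`. -/
def CofinitelyGenerated (R : Type*) [CommRing R] (M : Type*) [AddCommGroup M]
    [Module R M] : Prop :=
  ∀ S : Set (Submodule R M), S.Nonempty → sInf S = ⊥ →
    ∃ T ⊆ S, T.Finite ∧ T.Nonempty ∧ sInf T = ⊥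

theorem stmt_4 (R : Type*) [CommRing R] (M : Type*) [AddCommGroup M] [Module R M]
    [FaithfulSMul R M] (hM : IsMultiplicationModule R M) :
    CofinitelyGenerated R M ↔ CofinitelyGenerated R R := by
  classical
  -- choice function: for each submodule N, an ideal f N with N = f N • ⊤
  choose f hf using hM
  constructor
  · -- M cofg → R cofg
    intro hcof S hSne hSinf
    -- image family in M
    set S' : Set (Submodule R M) := (fun I : Ideal R => I • (⊤ : Submodule R M)) '' S with hS'
    have hS'ne : S'.Nonempty := hSne.image _
    have hS'inf : sInf S' = ⊥ := by
      rw [eq_bot_iff]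
      intro x hx
      rw [Submodule.mem_sInf] at hx
      have hx' : ∀ I ∈ S, x ∈ I • (⊤ : Submodule R M) := fun I hI =>
        hx _ ⟨I, hI, rfl⟩
      have := key_lemma (fun N => ⟨f N, hf N⟩) S hSne x hx'
      rw [hSinf] at this
      simpa using this
    obtain ⟨T', hT'S, hT'fin, hT'ne, hT'inf⟩ := hcof S' hS'ne hS'inf
    -- choose for each N ∈ T' an ideal in S
    have hsel : ∀ N ∈ T', ∃ I ∈ S, I • (⊤ : Submodule R M) = N := fun N hN => hT'S hN
    choose g hgS hgN using hsel
    set T : Set (Ideal R) := {I | ∃ N : Submodule R M, ∃ h : N ∈ T', g N h = I} with hT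
    have hTfin : T.Finite := by
      have : T ⊆ (fun p : T' => g p.1 p.2) '' Set.univ := by
        rintro I ⟨N, hN, rfl⟩; exact ⟨⟨N, hN⟩, trivial, rfl⟩
      exact Set.Finite.subset (Set.Finite.image _ (Set.finite_univ_iff.mpr
        (by exact Set.Finite.to_subtype hT'fin))) this
    have hTS : T ⊆ S := by rintro I ⟨N, hN, rfl⟩; exact hgS N hN
    have hTne : T.Nonempty := by
      obtain ⟨N, hN⟩ := hT'ne; exact ⟨g N hN, N, hN, rfl⟩
    refine ⟨T, hTS, hTfin, hTne, ?_⟩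
    -- sInf T = ⊥ via faithfulness
    have hsmul : (sInf T) • (⊤ : Submodule R M) = ⊥ := by
      rw [eq_bot_iff, ← hT'inf]
      have : ∀ N ∈ T', (sInf T) • (⊤ : Submodule R M) ≤ N := by
        intro N hN
        have hIT : g N hN ∈ T := ⟨N, hN, rfl⟩
        calc (sInf T) • (⊤ : Submodule R M) ≤ (g N hN) • (⊤ : Submodule R M) :=
              Submodule.smul_mono_left (sInf_le hIT)
          _ = N := hgN N hN
      exact le_sInf this
    exact ideal_eq_bot_of_smul_top_eq_bot hsmul
  · -- R cofg → M cofg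
    intro hcof S hSne hSinf
    set S' : Set (Ideal R) := f '' S with hS'
    have hS'ne : S'.Nonempty := hSne.image _
    have hS'inf : sInf S' = ⊥ := by
      apply ideal_eq_bot_of_smul_top_eq_bot (M := M)
      rw [eq_bot_iff, ← hSinf]
      refine le_sInf fun N hN => ?_
      calc (sInf S') • (⊤ : Submodule R M) ≤ (f N) • (⊤ : Submodule R M) :=
            Submodule.smul_mono_left (sInf_le ⟨N, hN, rfl⟩)
        _ = N := (hf N).symm
    obtain ⟨T', hT'S, hT'fin, hT'ne, hT'inf⟩ := hcof S' hS'ne hS'inf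
    have hsel : ∀ I ∈ T', ∃ N ∈ S, f N = I := fun I hI => hT'S hI
    choose g hgS hgI using hsel
    set T : Set (Submodule R M) := {N | ∃ I : Ideal R, ∃ h : I ∈ T', g I h = N} with hT
    have hTfin : T.Finite := by
      have : T ⊆ (fun p : T' => g p.1 p.2) '' Set.univ := by
        rintro N ⟨I, hI, rfl⟩; exact ⟨⟨I, hI⟩, trivial, rfl⟩
      exact Set.Finite.subset (Set.Finite.image _ (Set.finite_univ_iff.mpr
        (by exact Set.Finite.to_subtype hT'fin))) this
    have hTS : T ⊆ S := by rintro N ⟨I, hI, rfl⟩; exact hgS I hI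
    have hTne : T.Nonempty := by
      obtain ⟨I, hI⟩ := hT'ne; exact ⟨g I hI, I, hI, rfl⟩
    refine ⟨T, hTS, hTfin, hTne, ?_⟩
    rw [eq_bot_iff]
    intro x hx
    rw [Submodule.mem_sInf] at hx
    have hTideals : Set.Nonempty {I | ∃ N : Submodule R M, ∃ h : N ∈ T, f N = I} := by
      obtain ⟨N, hN⟩ := hTne; exact ⟨f N, N, hN, rfl⟩
    have hx' : ∀ I ∈ {I : Ideal R | ∃ N : Submodule R M, ∃ h : N ∈ T, f N = I},
        x ∈ I • (⊤ : Submodule R M) := by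
      rintro I ⟨N, hN, rfl⟩
      rw [← hf N]; exact hx N hN
    have hkey := key_lemma (fun N => ⟨f N, hf N⟩) _ hTideals x hx'
    have hinf2 : sInf {I : Ideal R | ∃ N : Submodule R M, ∃ h : N ∈ T, f N = I} = ⊥ := by
      rw [eq_bot_iff, ← hT'inf]
      refine le_sInf fun I hI => ?_
      have : f (g I hI) = I := hgI I hI
      exact this ▸ sInf_le ⟨g I hI, ⟨I, hI, rfl⟩, rfl⟩
    rw [hinf2] at hkey
    simpa using hkey
end

section
/- Let R be a commutative ring and M a faithful multiplication R-module. Let B be the intersection of all ideals A of R such that A • M = M. Then B • M = M, and moreover x ∈ B • (R • x) for every x ∈ M (equivalently, x ∈ B • x for every x ∈ M, i.e., for each x there is b ∈ B with x = b • x). -/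
theorem stmt_5 (R : Type*) [CommRing R] (M : Type*) [AddCommGroup M] [Module R M]
    [FaithfulSMul R M] (hM : IsMultiplicationModule R M)
    (B : Ideal R) (hB : B = sInf {A : Ideal R | A • (⊤ : Submodule R M) = ⊤}) :
    B • (⊤ : Submodule R M) = ⊤ ∧
      ∀ x : M, x ∈ B • Submodule.span R ({x} : Set M) := by
  have key : ∀ x : M, x ∈ B • Submodule.span R ({x} : Set M) := by
    intro x
    by_contra hx
    set N := B • Submodule.span R ({x} : Set M) with hN
    let J : Ideal R :=
      { carrier := {r | r • x ∈ N}
        add_mem' := fun {a b} ha hb => by simpa [add_smul] using N.add_mem ha hb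
        zero_mem' := by simp
        smul_mem' := fun c r hr => by
          simpa [smul_eq_mul, mul_smul] using N.smul_mem c hr }
    have hJtop : J ≠ ⊤ := by
      intro h
      apply hx
      have h1 : (1 : R) ∈ J := h ▸ Submodule.mem_top
      have h2 : (1 : R) • x ∈ N := h1
      simpa using h2
    obtain ⟨P, hPmax, hJP⟩ := Ideal.exists_le_maximal J hJtop
    by_cases hP : P • (⊤ : Submodule R M) = ⊤
    · obtain ⟨I, hI⟩ := hM (Submodule.span R ({x} : Set M))
      have hPx : x ∈ P • Submodule.span R ({x} : Set M) := by
        have : Submodule.span R ({x} : Set M) = P • Submodule.span R ({x} : Set M) := by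
          conv_lhs => rw [hI, ← hP, ← Submodule.smul_assoc, smul_eq_mul, mul_comm, ← smul_eq_mul,
            Submodule.smul_assoc, ← hI]
        exact this ▸ Submodule.mem_span_singleton_self x
      obtain ⟨p, hp, hpx⟩ := Submodule.mem_smul_span_singleton.mp hPx
      have h1p : (1 - p) ∈ J := by
        show (1 - p) • x ∈ N
        rw [sub_smul, one_smul, hpx, sub_self]
        exact N.zero_mem
      have h1P : (1 : R) ∈ P := by
        simpa using P.add_mem (hJP h1p) hp
      exact hPmax.ne_top (P.eq_top_of_isUnit_mem h1P isUnit_one)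
    · have hex : ∃ m : M, m ∉ P • (⊤ : Submodule R M) := by
        by_contra h
        push_neg at h
        exact hP (Submodule.eq_top_iff'.mpr h)
      obtain ⟨m, hm⟩ := hex
      obtain ⟨I, hI⟩ := hM (Submodule.span R ({m} : Set M))
      have hIP : ¬ I ≤ P := by
        intro hle
        apply hm
        have hmI : m ∈ I • (⊤ : Submodule R M) := hI ▸ Submodule.mem_span_singleton_self m
        exact Submodule.smul_mono hle le_rfl hmI
      obtain ⟨q, hqI, hqP⟩ := SetLike.not_le_iff_exists.mp hIP
      have hqtop : ∀ y : M, q • y ∈ Submodule.span R ({m} : Set M) := by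
        intro y
        rw [hI]
        exact Submodule.smul_mem_smul hqI Submodule.mem_top
      have hq2 : q * q ∈ B := by
        rw [hB]
        refine Submodule.mem_sInf.mpr ?_
        intro A hA
        have hmap : ∀ z ∈ A • (⊤ : Submodule R M),
            q • z ∈ A • Submodule.span R ({m} : Set M) := by
          intro z hz
          refine Submodule.smul_induction_on hz ?_ ?_
          · intro a ha y _
            rw [smul_comm]
            exact Submodule.smul_mem_smul ha (hqtop y)
          · intro z1 z2 h1 h2
            rw [smul_add]
            exact Submodule.add_mem _ h1 h2
        have hm' : q • m ∈ A • Submodule.span R ({m} : Set M) :=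
          hmap m (by rw [hA]; exact Submodule.mem_top)
        obtain ⟨a, haA, ham⟩ := Submodule.mem_smul_span_singleton.mp hm'
        have hfa : ∀ y : M, (q * q) • y = (a * q) • y := by
          intro y
          obtain ⟨s, hs⟩ := Submodule.mem_span_singleton.mp (hqtop y)
          calc (q * q) • y = q • (q • y) := by rw [mul_smul]
            _ = q • (s • m) := by rw [hs]
            _ = s • (q • m) := by rw [smul_comm]
            _ = s • (a • m) := by rw [ham]
            _ = a • (s • m) := by rw [smul_comm]
            _ = a • (q • y) := by rw [hs]
            _ = (a * q) • y := by rw [mul_smul]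
        have heq : q * q = a * q := FaithfulSMul.eq_of_smul_eq_smul hfa
        rw [heq]
        exact Ideal.mul_mem_right q A haA
      have hq2J : q * q ∈ J :=
        show (q * q) • x ∈ N from
          Submodule.mem_smul_span_singleton.mpr ⟨q * q, hq2, rfl⟩
      exact hqP ((hPmax.isPrime.mem_or_mem (hJP hq2J)).elim id id)
  refine ⟨?_, key⟩
  rw [eq_top_iff]
  intro x _
  exact Submodule.smul_mono le_rfl le_top (key x)
end

section
/- Let R be a commutative ring and M a faithful multiplication R-module. Let B = ⋂ {A ideal : A • M = M}. Then for every prime ideal P of R, either B ⊆ P or B + P = R. -/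
theorem stmt_7 (R : Type*) [CommRing R] (M : Type*) [AddCommGroup M] [Module R M]
    [FaithfulSMul R M] (hM : IsMultiplicationModule R M)
    (B : Ideal R) (hB : B = sInf {A : Ideal R | A • (⊤ : Submodule R M) = ⊤})
    (P : Ideal R) (hP : P.IsPrime) :
    B ≤ P ∨ B ⊔ P = ⊤ := by
  by_cases htop : B ⊔ P = ⊤
  · exact Or.inr htop
  left
  obtain ⟨Q, hQmax, hQle⟩ := Ideal.exists_le_maximal _ htop
  have hBQ : B ≤ Q := le_trans le_sup_left hQle
  have hPQ : P ≤ Q := le_trans le_sup_right hQle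
  by_cases hQM : Q • (⊤ : Submodule R M) = ⊤
  · -- case (a): Q M = M
    set T : Ideal R :=
      { carrier := {r : R | ∃ q ∈ Q, (1 - q) * r = 0}
        add_mem' := by
          rintro x y ⟨q1, hq1, h1⟩ ⟨q2, hq2, h2⟩
          refine ⟨q1 + q2 - q1 * q2, ?_, ?_⟩
          · exact Ideal.sub_mem _ (Ideal.add_mem _ hq1 hq2) (Ideal.mul_mem_right _ _ hq1)
          · linear_combination (1 - q2) * h1 + (1 - q1) * h2
        zero_mem' := ⟨0, Q.zero_mem, by ring⟩
        smul_mem' := by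
          rintro r x ⟨q, hq, h⟩
          exact ⟨q, hq, by simp only [smul_eq_mul]; linear_combination r * h⟩ } with hT
    have hTtop : T • (⊤ : Submodule R M) = ⊤ := by
      rw [eq_top_iff]
      rintro m -
      obtain ⟨I, hI⟩ := hM (Submodule.span R {m})
      have hIQ : I • (⊤ : Submodule R M) = Q • Submodule.span R {m} := by
        conv_lhs => rw [← hQM, ← Submodule.smul_assoc, Ideal.smul_eq_mul, mul_comm,
          ← Ideal.smul_eq_mul, Submodule.smul_assoc, ← hI]
      have hm : m ∈ Q • Submodule.span R {m} := by
        rw [← hIQ, ← hI]; exact Submodule.mem_span_singleton_self m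
      have hq : ∃ q ∈ Q, q • m = m := by
        have : ∀ x ∈ Q • Submodule.span R {m}, ∃ q ∈ Q, q • m = x := by
          intro x hx
          refine Submodule.smul_induction_on hx ?_ ?_
          · intro r hr n hn
            obtain ⟨t, ht⟩ := Submodule.mem_span_singleton.1 hn
            exact ⟨r * t, Ideal.mul_mem_right _ _ hr, by rw [mul_smul, ht]⟩
          · rintro x y ⟨q1, hq1, h1⟩ ⟨q2, hq2, h2⟩
            exact ⟨q1 + q2, Ideal.add_mem _ hq1 hq2, by rw [add_smul, h1, h2]⟩
        exact this m hm
      obtain ⟨q, hqQ, hqm⟩ := hq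
      have hkill : ∀ y ∈ I, (1 - q) * y = 0 := by
        intro y hy
        refine eq_of_smul_eq_smul (α := M) fun x => ?_
        have hyx : y • x ∈ Submodule.span R {m} := by
          rw [hI]; exact Submodule.smul_mem_smul hy trivial
        obtain ⟨t, ht⟩ := Submodule.mem_span_singleton.1 hyx
        have : (1 - q) • m = (0 : M) := by
          rw [sub_smul, one_smul, hqm, sub_self]
        rw [mul_smul, ← ht, smul_comm, this, smul_zero, zero_smul]
      have hIT : I ≤ T := fun y hy => ⟨q, hqQ, hkill y hy⟩
      have : m ∈ I • (⊤ : Submodule R M) := by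
        rw [← hI]; exact Submodule.mem_span_singleton_self m
      exact Submodule.smul_mono_left hIT this
    have hBT : B ≤ T := by
      rw [hB]; exact sInf_le hTtop
    intro b hb
    obtain ⟨q, hqQ, h0⟩ := hBT hb
    have hmem : (1 - q) * b ∈ P := by rw [h0]; exact P.zero_mem
    rcases hP.mem_or_mem hmem with h | h
    · exfalso
      have h1 : (1 : R) ∈ Q := by
        have := Q.add_mem (hPQ h) hqQ
        simpa using this
      exact hQmax.ne_top ((Ideal.eq_top_iff_one Q).2 h1)
    · exact h
  · -- case (b): Q M ≠ M, derive a contradiction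
    exfalso
    have hex : ∃ m : M, m ∉ Q • (⊤ : Submodule R M) := by
      by_contra h
      push_neg at h
      exact hQM (eq_top_iff.2 fun x _ => h x)
    obtain ⟨m, hm⟩ := hex
    obtain ⟨I, hI⟩ := hM (Submodule.span R {m})
    have hIQ : ¬ I ≤ Q := by
      intro h
      apply hm
      have : Submodule.span R {m} ≤ Q • (⊤ : Submodule R M) := by
        rw [hI]; exact Submodule.smul_mono_left h
      exact this (Submodule.mem_span_singleton_self m)
    have hsup : Q ⊔ I = ⊤ := hQmax.1.2 _ (left_lt_sup.2 hIQ)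
    have h1 : (1 : R) ∈ Q ⊔ I := by rw [hsup]; trivial
    obtain ⟨q, hqQ, a, haI, hqa⟩ := Submodule.mem_sup.1 h1
    have ha1 : a = 1 - q := by linear_combination hqa
    have key : ∀ A : Ideal R, A • (⊤ : Submodule R M) = ⊤ → (1 - q) ^ 2 ∈ A := by
      intro A hA
      have hmA : m ∈ A • (⊤ : Submodule R M) := by rw [hA]; trivial
      have hstep : ∃ c ∈ A, (1 - q) • m = c • m := by
        have haux : ∀ x ∈ A • (⊤ : Submodule R M), ∃ c ∈ A, (1 - q) • x = c • m := by
          intro x hx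
          refine Submodule.smul_induction_on hx ?_ ?_
          · intro r hr n _
            have hn : (1 - q) • n ∈ Submodule.span R {m} := by
              rw [hI, ← ha1]; exact Submodule.smul_mem_smul haI trivial
            obtain ⟨t, ht⟩ := Submodule.mem_span_singleton.1 hn
            refine ⟨r * t, Ideal.mul_mem_right _ _ hr, ?_⟩
            rw [smul_comm (1 - q) r n, ← ht, mul_smul]
          · rintro x y ⟨c1, hc1, h1⟩ ⟨c2, hc2, h2⟩
            exact ⟨c1 + c2, Ideal.add_mem _ hc1 hc2, by rw [smul_add, h1, h2, add_smul]⟩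
        exact haux m hmA
      obtain ⟨c, hcA, hc⟩ := hstep
      have hkillm : ((1 - q) - c) • m = 0 := by rw [sub_smul, hc, sub_self]
      have hkillI : ∀ y ∈ I, ((1 - q) - c) * y = 0 := by
        intro y hy
        refine eq_of_smul_eq_smul (α := M) fun x => ?_
        have hyx : y • x ∈ Submodule.span R {m} := by
          rw [hI]; exact Submodule.smul_mem_smul hy trivial
        obtain ⟨t, ht⟩ := Submodule.mem_span_singleton.1 hyx
        rw [mul_smul, ← ht, smul_comm, hkillm, smul_zero, zero_smul]
      have h2 : ((1 - q) - c) * a = 0 := hkillI a haI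
      rw [ha1] at h2
      have : (1 - q) ^ 2 = c * (1 - q) := by linear_combination h2
      rw [this]
      exact Ideal.mul_mem_right _ _ hcA
    have hBmem : (1 - q) ^ 2 ∈ B := by
      rw [hB, Ideal.mem_sInf]
      intro A hA
      exact key A hA
    have h1q : (1 - q) ∈ Q := hQmax.isPrime.mem_of_pow_mem 2 (hBQ hBmem)
    have : (1 : R) ∈ Q := by
      have := Q.add_mem h1q hqQ
      simpa using this
    exact hQmax.ne_top ((Ideal.eq_top_iff_one Q).2 this)
end

section
/- Let R be a commutative ring and M a nonzero multiplication R-module. Then the Jacobson radical of M (the intersection of all maximal submodules of M) equals (⋂ {P maximal ideal of R : P • M ≠ M}) • M. -/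
/-!
A maximal submodule `N` of a multiplication module is `P • M` for the maximal ideal
`P = (N : M)`, the annihilator of the simple module `M ⧸ N`; conversely `P • M` is maximal
whenever `P` is a maximal ideal with `P • M ≠ M`, since any `I • M ⊋ P • M` forces `I ⊄ P`,
hence `I + P = R`. So `J(M) = ⨅ P, P • M` over these `P`. Writing `J(M) = I • M`, the ideal
`I` must lie in every such `P`, for otherwise `M = (I + P) • M ⊆ P • M`; thus
`J(M) ≤ (⋂ P) • M`, and the reverse inclusion is monotonicity of `• M`.
-/

namespace Submodule

variable {R M : Type*} [CommRing R] [AddCommGroup M] [Module R M]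

theorem smul_top_le_iff_le_colon {I : Ideal R} {N : Submodule R M} :
    I • (⊤ : Submodule R M) ≤ N ↔ I ≤ N.colon Set.univ := by
  rw [smul_le]
  simp only [mem_top, forall_const, SetLike.le_def, mem_colon, Set.mem_univ]

theorem codisjoint_smul_top_of_not_le {I P : Ideal R} (hP : P.IsMaximal) (hIP : ¬I ≤ P) :
    Codisjoint (P • (⊤ : Submodule R M)) (I • ⊤) := by
  rw [codisjoint_iff, ← sup_smul, codisjoint_iff.mp (hP.out.not_le_iff_codisjoint.mp hIP),
    top_smul]

theorem le_of_smul_top_le {I P : Ideal R} (hP : P.IsMaximal) (hPM : P • (⊤ : Submodule R M) ≠ ⊤)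
    (h : I • (⊤ : Submodule R M) ≤ P • ⊤) : I ≤ P := by
  by_contra hIP
  exact hPM ((codisjoint_smul_top_of_not_le hP hIP).eq_top_of_le h)

end Submodule

namespace IsMultiplicationModule

open Submodule

variable {R M : Type*} [CommRing R] [AddCommGroup M] [Module R M]

theorem isCoatom_smul_top (hM : IsMultiplicationModule R M) {P : Ideal R} (hP : P.IsMaximal)
    (hPM : P • (⊤ : Submodule R M) ≠ ⊤) : IsCoatom (P • (⊤ : Submodule R M)) := by
  refine ⟨hPM, fun N hN ↦ ?_⟩
  obtain ⟨I, rfl⟩ := hM N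
  have hIP : ¬I ≤ P := fun hIP ↦ hN.not_ge (smul_mono_left hIP)
  exact top_le_iff.mp ((codisjoint_smul_top_of_not_le hP hIP).top_le.trans (sup_le hN.le le_rfl))

theorem eq_colon_smul_top (hM : IsMultiplicationModule R M) (N : Submodule R M) :
    N = N.colon Set.univ • ⊤ := by
  obtain ⟨I, hI⟩ := hM N
  refine le_antisymm ?_ (smul_top_le_iff_le_colon.mpr le_rfl)
  calc N = I • ⊤ := hI
    _ ≤ N.colon Set.univ • ⊤ := smul_mono_left (smul_top_le_iff_le_colon.mp hI.ge)

theorem isCoatom_iff (hM : IsMultiplicationModule R M) {N : Submodule R M} :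
    IsCoatom N ↔ ∃ P : Ideal R, (P.IsMaximal ∧ P • (⊤ : Submodule R M) ≠ ⊤) ∧ P • ⊤ = N := by
  refine ⟨fun hN ↦ ⟨N.colon Set.univ, ⟨?_, ?_⟩, (hM.eq_colon_smul_top N).symm⟩, ?_⟩
  · have : IsSimpleModule R (M ⧸ N) := isSimpleModule_iff_isCoatom.mpr hN
    rw [← annihilator_quotient]
    exact IsSimpleModule.annihilator_isMaximal
  · rw [← hM.eq_colon_smul_top N]
    exact hN.ne_top
  · rintro ⟨P, ⟨hP, hPM⟩, rfl⟩
    exact hM.isCoatom_smul_top hP hPM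

theorem sInf_smul_top (hM : IsMultiplicationModule R M) {S : Set (Ideal R)}
    (hS : ∀ P ∈ S, P.IsMaximal ∧ P • (⊤ : Submodule R M) ≠ ⊤) :
    sInf S • (⊤ : Submodule R M) = ⨅ P ∈ S, P • ⊤ := by
  refine le_antisymm (le_iInf₂ fun P hP ↦ smul_mono_left (sInf_le hP)) ?_
  obtain ⟨I, hI⟩ := hM (⨅ P ∈ S, P • ⊤)
  rw [hI]
  refine smul_mono_left (le_sInf fun P hP ↦ le_of_smul_top_le (hS P hP).1 (hS P hP).2 ?_)
  exact hI ▸ iInf₂_le P hP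

end IsMultiplicationModule

theorem stmt_9_general (R : Type*) [CommRing R] (M : Type*) [AddCommGroup M] [Module R M]
    (hM : IsMultiplicationModule R M) :
    sInf {N : Submodule R M | IsCoatom N} =
      (sInf {P : Ideal R | P.IsMaximal ∧ P • (⊤ : Submodule R M) ≠ ⊤}) •
        (⊤ : Submodule R M) := by
  have hcoatoms : {N : Submodule R M | IsCoatom N} =
      (· • ⊤) '' {P : Ideal R | P.IsMaximal ∧ P • (⊤ : Submodule R M) ≠ ⊤} := by
    ext N
    exact hM.isCoatom_iff
  rw [hcoatoms, sInf_image]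
  exact (hM.sInf_smul_top fun _ hP ↦ hP).symm

theorem stmt_9 (R : Type*) [CommRing R] (M : Type*) [AddCommGroup M] [Module R M]
    [Nontrivial M] (hM : IsMultiplicationModule R M) :
    sInf {N : Submodule R M | IsCoatom N} =
      (sInf {P : Ideal R | P.IsMaximal ∧ P • (⊤ : Submodule R M) ≠ ⊤}) •
        (⊤ : Submodule R M) :=
  stmt_9_general R M hM
end

section
/- Let R be a commutative ring, Q a primary ideal of R, and M a faithful multiplication R-module. If r ∈ R and m ∈ M satisfy r • m ∈ Q • M, then r ∈ √Q (the radical of Q) or m ∈ Q • M. -/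
theorem stmt_10 (R : Type*) [CommRing R] (M : Type*) [AddCommGroup M] [Module R M]
    [FaithfulSMul R M] (hM : IsMultiplicationModule R M)
    (Q : Ideal R) (hQ : Q.IsPrimary) (r : R) (m : M)
    (h : r • m ∈ Q • (⊤ : Submodule R M)) :
    r ∈ Q.radical ∨ m ∈ Q • (⊤ : Submodule R M) := by
  obtain ⟨hQtop, hQprim⟩ := Ideal.isPrimary_iff.mp hQ
  by_contra hc
  push_neg at hc
  obtain ⟨hr, hm⟩ := hc
  -- The ideal J = (QM : m)
  set QM : Submodule R M := Q • (⊤ : Submodule R M) with hQM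
  set J : Ideal R := QM.comap (LinearMap.toSpanSingleton R M m) with hJ
  have hmemJ : ∀ a : R, a ∈ J ↔ a • m ∈ QM := fun a => Iff.rfl
  have hJne : J ≠ ⊤ := by
    intro htop
    have : (1 : R) ∈ J := htop ▸ Submodule.mem_top
    rw [hmemJ, one_smul] at this
    exact hm this
  obtain ⟨P, hPmax, hJP⟩ := Ideal.exists_le_maximal J hJne
  by_cases hPM : (P • ⊤ : Submodule R M) = ⊤
  · -- Case M = PM : then span {m} = P • span {m}, so (1-p) • m = 0
    obtain ⟨I, hI⟩ := hM (Submodule.span R {m})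
    have hspan : Submodule.span R ({m} : Set M) = P • Submodule.span R ({m} : Set M) := by
      conv_lhs => rw [hI, ← hPM]
      rw [smul_comm I P (⊤ : Submodule R M), ← hI]
    have hmmem : m ∈ P • Submodule.span R ({m} : Set M) := by
      rw [← hspan]; exact Submodule.mem_span_singleton_self m
    obtain ⟨p, hp, hpm⟩ := Submodule.mem_smul_span_singleton.mp hmmem
    have h1p : (1 - p) ∈ J := by
      rw [hmemJ, sub_smul, one_smul, hpm, sub_self]
      exact Submodule.zero_mem QM
    have : (1 : R) ∈ P := by
      have := P.add_mem (hJP h1p) (P.smul_mem 1 hp)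
      simpa using this
    exact hPmax.ne_top (P.eq_top_iff_one.mpr this)
  · -- Case PM ≠ ⊤ : get x ∉ PM, and q ∉ P with q M ⊆ span {x}
    obtain ⟨x, hx⟩ : ∃ x : M, x ∉ (P • ⊤ : Submodule R M) := by
      by_contra hall; push_neg at hall
      exact hPM (Submodule.eq_top_iff'.mpr hall)
    obtain ⟨I, hI⟩ := hM (Submodule.span R {x})
    have hIP : ¬ I ≤ P := by
      intro hle
      exact hx (Submodule.smul_mono hle le_rfl (hI ▸ Submodule.mem_span_singleton_self x))
    obtain ⟨q, hqI, hqP⟩ := SetLike.not_le_iff_exists.mp hIP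
    have hqM : ∀ y : M, ∃ c : R, q • y = c • x := by
      intro y
      have : q • y ∈ Submodule.span R ({x} : Set M) := by
        rw [hI]; exact Submodule.smul_mem_smul hqI Submodule.mem_top
      obtain ⟨c, hc⟩ := Submodule.mem_span_singleton.mp this
      exact ⟨c, hc.symm⟩
    obtain ⟨c, hcx⟩ := hqM m
    -- q • (r • m) ∈ Q • span {x}
    have hqrm : q • r • m ∈ Q • Submodule.span R ({x} : Set M) := by
      have h1 : q • r • m ∈ (QM.map (LinearMap.lsmul R M q)) := Submodule.mem_map_of_mem h
      rw [hQM, Submodule.map_smul''] at h1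
      refine Submodule.smul_mono le_rfl ?_ h1
      intro y hy
      obtain ⟨z, _, hz⟩ := hy
      obtain ⟨c', hc'⟩ := hqM z
      rw [← hz]
      exact Submodule.mem_span_singleton.mpr ⟨c', by simpa using hc'.symm⟩
    obtain ⟨q', hq'Q, hq'x⟩ := Submodule.mem_smul_span_singleton.mp hqrm
    -- (r*c - q') • x = 0
    have hker : (r * c - q') • x = 0 := by
      have : (r * c) • x = q' • x := by
        rw [mul_smul, ← hcx, smul_comm r q]
        exact hq'x.symm
      rw [sub_smul, this, sub_self]
    -- faithfulness: (r*c - q') * q = 0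
    have hzero : (r * c - q') * q = 0 := by
      have hy : ∀ y : M, ((r * c - q') * q) • y = (0 : R) • y := by
        intro y
        obtain ⟨cy, hcy⟩ := hqM y
        rw [zero_smul, mul_smul, hcy, smul_comm, hker, smul_zero]
      exact eq_of_smul_eq_smul hy
    have hrcq : c * q * r ∈ Q := by
      have : r * c * q = q' * q := by linear_combination hzero
      have h2 : r * c * q ∈ Q := this ▸ Q.mul_mem_right q hq'Q
      convert h2 using 1; ring
    have hcq : c * q ∈ Q := (hQprim hrcq).resolve_right hr
    -- q^2 ∈ J
    have hq2 : q * q ∈ J := by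
      rw [hmemJ, mul_smul, hcx, ← mul_smul, mul_comm]
      exact Submodule.smul_mem_smul hcq Submodule.mem_top
    exact hqP (hPmax.isPrime.mem_of_pow_mem 2 (by rw [pow_two]; exact hJP hq2))
end

section
/- Let R be a commutative ring and M a faithful multiplication R-module. If Q is a primary ideal of R with Q • M ≠ M, then the submodule N = Q • M is a primary submodule of M, i.e., whenever r • m ∈ N with m ∉ N, then r lies in the radical of the ideal (N : M) = {s ∈ R : s • M ⊆ N}. -/
theorem stmt_11 (R : Type*) [CommRing R] (M : Type*) [AddCommGroup M] [Module R M]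
    [FaithfulSMul R M] (hM : IsMultiplicationModule R M)
    (Q : Ideal R) (hQ : Q.IsPrimary) (hQM : Q • (⊤ : Submodule R M) ≠ ⊤) :
    ∀ r : R, ∀ m : M, r • m ∈ Q • (⊤ : Submodule R M) →
      m ∉ Q • (⊤ : Submodule R M) →
        r ∈ ((Q • (⊤ : Submodule R M)).colon ⊤).radical := by
  obtain ⟨hQne, hQprim⟩ := Ideal.isPrimary_iff.mp hQ
  intro r m hrm hm
  set N : Submodule R M := Q • (⊤ : Submodule R M) with hN
  by_contra hr
  -- Q ≤ (N : ⊤)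
  have hQle : Q ≤ N.colon ⊤ := by
    intro q hq
    rw [Submodule.mem_colon]
    intro p _
    exact Submodule.smul_mem_smul hq trivial
  have hrQ : r ∉ Q.radical := fun h => hr (Ideal.radical_mono hQle h)
  -- K = (N : m)
  set K : Ideal R := N.comap (LinearMap.toSpanSingleton R M m) with hK
  have hmemK : ∀ a : R, a ∈ K ↔ a • m ∈ N := fun a => Iff.rfl
  have hKne : K ≠ ⊤ := by
    intro h
    exact hm (by simpa using (hmemK 1).mp (h ▸ Submodule.mem_top))
  obtain ⟨P, hPmax, hKP⟩ := Ideal.exists_le_maximal K hKne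
  -- the trace-like ideal A
  set A : Ideal R := ⨆ x : M, (Submodule.span R {x}).colon ⊤ with hA
  have hMA : (⊤ : Submodule R M) ≤ A • ⊤ := by
    intro y _
    obtain ⟨I, hI⟩ := hM (Submodule.span R {y})
    have hIA : I ≤ A := by
      refine le_trans ?_ (le_iSup (fun x : M => (Submodule.span R {x}).colon ⊤) y)
      intro a ha
      rw [Submodule.mem_colon]
      intro p hp
      rw [hI]
      exact Submodule.smul_mem_smul ha hp
    have : y ∈ Submodule.span R {y} := Submodule.mem_span_singleton_self y
    rw [hI] at this
    exact Submodule.smul_mono_left hIA this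
  by_cases hAP : A ≤ P
  · -- then ⊤ = P • ⊤, so m ∈ P • span{m}, contradiction
    have hPtop : (⊤ : Submodule R M) = P • ⊤ :=
      le_antisymm (le_trans hMA (Submodule.smul_mono_left hAP)) le_top
    obtain ⟨I, hI⟩ := hM (Submodule.span R {m})
    have : Submodule.span R {m} = P • Submodule.span R {m} := by
      conv_lhs => rw [hI, hPtop, ← Submodule.smul_assoc, Ideal.smul_eq_mul, mul_comm,
        ← Ideal.smul_eq_mul, Submodule.smul_assoc, ← hI]
    have hmP : m ∈ P • Submodule.span R {m} := this ▸ Submodule.mem_span_singleton_self m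
    obtain ⟨p, hp, hpm⟩ := Submodule.mem_smul_span_singleton.mp hmP
    have h1p : (1 - p) ∈ K := by
      rw [hmemK]
      have : (1 - p) • m = 0 := by rw [sub_smul, one_smul, hpm, sub_self]
      rw [this]; exact N.zero_mem
    have : (1 : R) ∈ P := by
      have := P.add_mem (hKP h1p) hp
      simpa using this
    exact hPmax.ne_top (Ideal.eq_top_iff_one P |>.mpr this)
  · -- P-cyclic case
    have hx : ∃ x : M, ¬ (Submodule.span R {x}).colon ⊤ ≤ P := by
      by_contra h
      push_neg at h
      exact hAP (iSup_le h)
    obtain ⟨x, hxP⟩ := hx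
    obtain ⟨u, hu, huP⟩ : ∃ u, u ∈ (Submodule.span R {x}).colon ⊤ ∧ u ∉ P := by
      by_contra h
      push_neg at h
      exact hxP h
    obtain ⟨v, q, hqP, hvq⟩ := hPmax.exists_inv huP
    set e : R := v * u with he
    have hey : ∀ y : M, e • y ∈ Submodule.span R {x} := by
      intro y
      rw [he, mul_smul]
      exact Submodule.smul_mem _ v (Submodule.mem_colon.mp hu y trivial)
    -- e • m = a • x
    obtain ⟨a, ha⟩ := Submodule.mem_span_singleton.mp (hey m)
    -- e • (r • m) ∈ Q • span{x}
    have hL : N ≤ (Q • Submodule.span R {x}).comap (LinearMap.lsmul R M e) := by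
      rw [hN]
      rw [Submodule.smul_le]
      intro q₀ hq₀ y _
      simp only [Submodule.mem_comap, LinearMap.lsmul_apply]
      rw [smul_comm]
      exact Submodule.smul_mem_smul hq₀ (hey y)
    have herm : e • (r • m) ∈ Q • Submodule.span R {x} := hL hrm
    obtain ⟨q₁, hq₁, hq₁x⟩ := Submodule.mem_smul_span_singleton.mp herm
    have hrax : (r * a) • x = q₁ • x := by
      rw [mul_smul, ha, hq₁x, smul_comm]
    -- (r*a - q₁) * e annihilates M
    have hzero : (r * a - q₁) * e = 0 := by
      refine eq_of_smul_eq_smul (α := M) fun y => ?_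
      obtain ⟨b, hb⟩ := Submodule.mem_span_singleton.mp (hey y)
      rw [zero_smul, mul_smul, ← hb, smul_comm, sub_smul, hrax, sub_self, smul_zero]
    have hraeQ : (a * e) * r ∈ Q := by
      have : (r * a) * e = q₁ * e := by
        calc (r * a) * e = (r * a - q₁) * e + q₁ * e := by ring
        _ = q₁ * e := by rw [hzero, zero_add]
      have : (a * e) * r = q₁ * e := by rw [← this]; ring
      rw [this]
      exact Q.mul_mem_right e hq₁
    have haeQ : a * e ∈ Q := by
      rcases hQprim hraeQ with h | h
      · exact h
      · exact absurd h hrQ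
    -- (e*e) • m ∈ N
    have heeK : e * e ∈ K := by
      rw [hmemK]
      have : (e * e) • m = (a * e) • x := by
        rw [mul_smul, ← ha, ← mul_smul, mul_comm a e, mul_smul, ha, ← mul_smul, mul_comm]
      rw [this, hN]
      exact Submodule.smul_mem_smul haeQ trivial
    have heP : e ∈ P := by
      rcases hPmax.isPrime.mem_or_mem (hKP heeK) with h | h <;> exact h
    have : (1 : R) ∈ P := by
      have := P.add_mem heP hqP
      rw [he] at this
      rwa [hvq] at this
    exact hPmax.ne_top (Ideal.eq_top_iff_one P |>.mpr this)
end

section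
/- Let R be a commutative ring and M a faithful multiplication R-module. For a proper submodule N of M the following are equivalent: (1) N is a primary submodule of M; (2) the ideal (N : M) = {r ∈ R : r • M ⊆ N} is a primary ideal of R; (3) N = Q • M for some primary ideal Q of R containing the annihilator of M. -/
section Aux

variable {R : Type*} [CommRing R] {M : Type*} [AddCommGroup M] [Module R M]

/-- In a multiplication module, every submodule equals its colon ideal times `M`. -/
lemma colon_smul_top_eq (hM : IsMultiplicationModule R M) (N : Submodule R M) :
    (N.colon ⊤) • (⊤ : Submodule R M) = N := by
  obtain ⟨I, hI⟩ := hM N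
  apply le_antisymm
  · rw [Submodule.smul_le]
    intro r hr n _
    exact Submodule.mem_colon.mp hr n trivial
  · conv_lhs => rw [hI]
    apply Submodule.smul_mono_left
    intro i hi
    rw [Submodule.mem_colon]
    intro p _
    rw [hI]
    exact Submodule.smul_mem_smul hi trivial

lemma mem_colon_span {N : Submodule R M} {a : R} {m : M} (h : a • m ∈ N) :
    a ∈ N.colon (Submodule.span R {m}) := by
  rw [Submodule.mem_colon]
  intro p hp
  obtain ⟨t, rfl⟩ := Submodule.mem_span_singleton.mp hp
  rw [smul_comm]
  exact N.smul_mem t h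

/-- Key case (ii): if every cyclic colon ideal lies in `P`, then every element is
killed by `1 - c` for some `c ∈ P`. -/
lemma exists_smul_eq_self (hM : IsMultiplicationModule R M) (P : Ideal R)
    (hP : ∀ z : M, (Submodule.span R {z}).colon ⊤ ≤ P) (m : M) :
    ∃ c ∈ P, c • m = m := by
  have inner : ∀ a ∈ (Submodule.span R {m}).colon ⊤, ∀ y : M, ∃ c ∈ P, a • y = c • m := by
    intro a ha y
    have hy : y ∈ ((Submodule.span R {y}).colon ⊤) • (⊤ : Submodule R M) := by
      rw [colon_smul_top_eq hM]
      exact Submodule.mem_span_singleton_self y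
    refine Submodule.smul_induction_on hy ?_ ?_
    · intro b hb z _
      have haz : a • z ∈ Submodule.span R {m} := Submodule.mem_colon.mp ha z trivial
      obtain ⟨t, ht⟩ := Submodule.mem_span_singleton.mp haz
      refine ⟨b * t, P.mul_mem_right t (hP y hb), ?_⟩
      rw [smul_comm a b z, ← ht, smul_smul]
    · rintro x y ⟨c1, hc1, e1⟩ ⟨c2, hc2, e2⟩
      exact ⟨c1 + c2, P.add_mem hc1 hc2, by rw [smul_add, e1, e2, add_smul]⟩
  have hm : m ∈ ((Submodule.span R {m}).colon ⊤) • (⊤ : Submodule R M) := by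
    rw [colon_smul_top_eq hM]
    exact Submodule.mem_span_singleton_self m
  refine Submodule.smul_induction_on (p := fun x => ∃ c ∈ P, c • m = x) hm ?_ ?_
  · intro a ha y _
    obtain ⟨c, hc, e⟩ := inner a ha y
    exact ⟨c, hc, e.symm⟩
  · rintro x y ⟨c1, hc1, e1⟩ ⟨c2, hc2, e2⟩
    exact ⟨c1 + c2, P.add_mem hc1 hc2, by rw [add_smul, e1, e2]⟩

end Aux

theorem stmt_12 (R : Type*) [CommRing R] (M : Type*) [AddCommGroup M] [Module R M]
    [FaithfulSMul R M] (hM : IsMultiplicationModule R M)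
    (N : Submodule R M) (hN : N ≠ ⊤) :
    List.TFAE
      [∀ r : R, ∀ m : M, r • m ∈ N → m ∉ N → r ∈ (N.colon ⊤).radical,
       (N.colon ⊤).IsPrimary,
       ∃ Q : Ideal R, Q.IsPrimary ∧ Module.annihilator R M ≤ Q ∧
         N = Q • (⊤ : Submodule R M)] := by
  have hcolon_ne_top : N.colon ⊤ ≠ ⊤ := by
    intro h
    apply hN
    rw [Submodule.eq_top_iff']
    intro x
    have h1 : (1 : R) ∈ N.colon ⊤ := h ▸ Submodule.mem_top
    simpa using Submodule.mem_colon.mp h1 x trivial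
  tfae_have 1 → 2
  | h1 => by
    rw [Ideal.isPrimary_iff]
    refine ⟨hcolon_ne_top, fun {x y} hxy => ?_⟩
    by_cases hx : x ∈ N.colon ⊤
    · exact Or.inl hx
    · right
      rw [Submodule.mem_colon] at hx
      push_neg at hx
      obtain ⟨m, -, hm⟩ := hx
      have hyxm : y • (x • m) ∈ N := by
        rw [smul_smul, mul_comm]
        exact Submodule.mem_colon.mp hxy m trivial
      exact h1 y (x • m) hyxm hm
  tfae_have 2 → 3
  | h2 => ⟨N.colon ⊤, h2, fun a ha => by
      rw [Submodule.mem_colon]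
      intro p _
      rw [Module.mem_annihilator.mp ha p]
      exact N.zero_mem, (colon_smul_top_eq hM N).symm⟩
  tfae_have 3 → 1
  | ⟨Q, hQ, hann, hNQ⟩ => by
    intro r m hrm hmN
    have hQle : Q ≤ N.colon ⊤ := by
      intro q hq
      rw [Submodule.mem_colon]
      intro p _
      rw [hNQ]
      exact Submodule.smul_mem_smul hq trivial
    by_cases hrQ : r ∈ Q.radical
    · exact Ideal.radical_mono hQle hrQ
    exfalso
    -- the ideal J = (N : m)
    set J := N.colon (Submodule.span R {m}) with hJ
    have hJ_ne_top : J ≠ ⊤ := by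
      intro h
      apply hmN
      have h1 : (1 : R) ∈ J := h ▸ Submodule.mem_top
      simpa using Submodule.mem_colon.mp h1 m (Submodule.mem_span_singleton_self m)
    obtain ⟨P, hPmax, hJP⟩ := Ideal.exists_le_maximal J hJ_ne_top
    by_cases hcase : ∀ z : M, (Submodule.span R {z}).colon ⊤ ≤ P
    · obtain ⟨c, hcP, hcm⟩ := exists_smul_eq_self hM P hcase m
      have h1c : (1 - c) ∈ J := mem_colon_span (by
        rw [sub_smul, one_smul, hcm, sub_self]; exact N.zero_mem)
      exact hPmax.ne_top (Ideal.eq_top_iff_one P |>.mpr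
        (by simpa using P.add_mem hcP (hJP h1c)))
    · push_neg at hcase
      obtain ⟨z, hz⟩ := hcase
      obtain ⟨b, hb, hbP⟩ := SetLike.not_le_iff_exists.mp hz
      obtain ⟨u, q, hqP, huq⟩ := hPmax.exists_inv hbP
      have h1q : ∀ x : M, (1 - q) • x ∈ Submodule.span R {z} := by
        intro x
        have : (1 - q) = u * b := by linear_combination -huq
        rw [this, mul_smul]
        exact Submodule.smul_mem _ u (Submodule.mem_colon.mp hb x trivial)
      obtain ⟨s, hs⟩ := Submodule.mem_span_singleton.mp (h1q m)
      -- (1-q) • (r • m) = q' • z for some q' ∈ Q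
      have hrm' : r • m ∈ Q • (⊤ : Submodule R M) := hNQ ▸ hrm
      have key : ∃ q' ∈ Q, (1 - q) • (r • m) = q' • z := by
        refine Submodule.smul_induction_on
          (p := fun x => ∃ q' ∈ Q, (1 - q) • x = q' • z) hrm' ?_ ?_
        · intro a ha y _
          obtain ⟨t, ht⟩ := Submodule.mem_span_singleton.mp (h1q y)
          refine ⟨a * t, Q.mul_mem_right t ha, ?_⟩
          rw [smul_comm, ← ht, smul_smul]
        · rintro x y ⟨c1, hc1, e1⟩ ⟨c2, hc2, e2⟩
          exact ⟨c1 + c2, Q.add_mem hc1 hc2, by rw [smul_add, e1, e2, add_smul]⟩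
      obtain ⟨q', hq'Q, hq'⟩ := key
      have hw0 : (r * s - q') • z = 0 := by
        have : (r * s) • z = q' • z := by
          rw [mul_smul, hs, smul_comm, hq']
        rw [sub_smul, this, sub_self]
      have hzero : (r * s - q') * (1 - q) = 0 := by
        apply FaithfulSMul.eq_of_smul_eq_smul (M := R) (α := M)
        intro x
        obtain ⟨t, ht⟩ := Submodule.mem_span_singleton.mp (h1q x)
        rw [zero_smul, mul_smul, ← ht, smul_comm, hw0, smul_zero]
      have hQmul : (s * (1 - q)) * r ∈ Q := by
        have h0 : r * s * (1 - q) - q' * (1 - q) = 0 := by linear_combination hzero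
        have : r * s * (1 - q) = q' * (1 - q) := by linear_combination h0
        rw [show (s * (1 - q)) * r = r * s * (1 - q) by ring, this]
        exact Q.mul_mem_right _ hq'Q
      have hsq : s * (1 - q) ∈ Q := by
        rcases (Ideal.isPrimary_iff.mp hQ).2 hQmul with h | h
        · exact h
        · exact absurd h hrQ
      have hsqz : ((1 - q) * (1 - q)) ∈ J := by
        apply mem_colon_span
        have : ((1 - q) * (1 - q)) • m = (s * (1 - q)) • z := by
          rw [mul_smul, ← hs, smul_smul, mul_comm]
        rw [this, hNQ]
        exact Submodule.smul_mem_smul hsq trivial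
      have h1qP : (1 - q) ∈ P := by
        rcases hPmax.isPrime.mem_or_mem (hJP hsqz) with h | h <;> exact h
      exact hPmax.ne_top (Ideal.eq_top_iff_one P |>.mpr
        (by simpa using P.add_mem hqP h1qP))
  tfae_finish
end

section
/- Let R be a commutative ring and M an R-module with submodules (N_λ) such that M = Σ_λ N_λ and R = Σ_λ (N_λ : M), where (N_λ : M) = {r ∈ R : r • M ⊆ N_λ}. If each N_λ is a multiplication module, then every submodule N of M satisfies N = (N : M) • M; in particular M is a multiplication module. -/
theorem stmt_14 (R : Type*) [CommRing R] (M : Type*) [AddCommGroup M] [Module R M]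
    {ι : Type*} (N : ι → Submodule R M) (hsum : (⨆ i, N i) = ⊤)
    (hcol : (⨆ i, (N i).colon ⊤) = (⊤ : Ideal R))
    (hmul : ∀ i, IsMultiplicationModule R (N i)) :
    (∀ K : Submodule R M, K = K.colon ⊤ • (⊤ : Submodule R M)) ∧
      IsMultiplicationModule R M := by
  have key : ∀ K : Submodule R M, K = K.colon ⊤ • (⊤ : Submodule R M) := by
    intro K
    have hle : K.colon ⊤ • (⊤ : Submodule R M) ≤ K := by
      rw [Submodule.smul_le]
      intro r hr n _
      exact (Submodule.mem_colon.mp hr) n trivial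
    set C : Ideal R := (K.colon ⊤ • (⊤ : Submodule R M)).colon K with hCdef
    have hrad : ∀ i, (N i).colon ⊤ ≤ C.radical := by
      intro i r hr
      obtain ⟨I, hI⟩ := hmul i ((K ⊓ N i).comap (N i).subtype)
      have hKN : K ⊓ N i = I • N i := by
        have h := congrArg (Submodule.map (N i).subtype) hI
        rw [Submodule.map_comap_subtype, Submodule.map_smul'', Submodule.map_top,
          Submodule.range_subtype] at h
        rwa [inf_eq_right.mpr inf_le_right] at h
      -- r^2 ∈ C
      have hr2 : r ^ 2 ∈ C := by
        rw [hCdef]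
        rw [Submodule.mem_colon]
        intro k hk
        have hrk : r • k ∈ I • N i := by
          rw [← hKN]
          exact ⟨K.smul_mem r hk, (Submodule.mem_colon.mp hr) k trivial⟩
        have : r • (r • k) ∈ K.colon ⊤ • (⊤ : Submodule R M) := by
          refine Submodule.smul_induction_on hrk ?_ ?_
          · intro a ha n hn
            have hmem : a * r ∈ K.colon ⊤ := by
              rw [Submodule.mem_colon]
              intro m _
              have : (a * r) • m = a • (r • m) := by rw [mul_smul]
              rw [this]
              have hrm : r • m ∈ N i := (Submodule.mem_colon.mp hr) m trivial
              have : a • (r • m) ∈ I • N i := Submodule.smul_mem_smul ha hrm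
              rw [← hKN] at this
              exact this.1
            have : r • (a • n) = (a * r) • n := by
              rw [mul_smul, smul_comm]
            rw [this]
            exact Submodule.smul_mem_smul hmem trivial
          · intro x y hx hy
            rw [smul_add]
            exact Submodule.add_mem _ hx hy
        rwa [← mul_smul, ← pow_two] at this
      exact Ideal.mem_radical_iff.mpr ⟨2, hr2⟩
    have htop : (⊤ : Ideal R) ≤ C.radical := by
      rw [← hcol]
      exact iSup_le hrad
    have h1 : (1 : R) ∈ C := by
      obtain ⟨n, hn⟩ := Ideal.mem_radical_iff.mp (htop trivial)
      rwa [one_pow] at hn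
    refine le_antisymm ?_ hle
    intro x hx
    have := (Submodule.mem_colon.mp h1) x hx
    rwa [one_smul] at this
  exact ⟨key, fun K => ⟨K.colon ⊤, key K⟩⟩
end

section
/- Let R be a commutative ring and M an R-module that is the sum M = Σ_λ N_λ of multiplication submodules N_λ, and assume M is a multiplication module. Then every submodule N of M satisfies N = Σ_λ (N ∩ N_λ). -/
theorem stmt_15 (R : Type*) [CommRing R] (M : Type*) [AddCommGroup M] [Module R M]
    {ι : Type*} (N : ι → Submodule R M) (hsum : (⨆ i, N i) = ⊤)
    (hmul : ∀ i, IsMultiplicationModule R (N i))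
    (hM : IsMultiplicationModule R M) :
    ∀ K : Submodule R M, K = ⨆ i, (K ⊓ N i) := by
  intro K
  obtain ⟨I, hI⟩ := hM K
  refine le_antisymm ?_ (iSup_le fun i => inf_le_left)
  have h1 : K = ⨆ i, I • N i := by rw [hI, ← hsum, Submodule.smul_iSup]
  have h2 : ∀ i, I • N i ≤ K ⊓ N i := fun i =>
    le_inf (hI ▸ smul_mono_right I le_top) (Submodule.smul_le_right)
  exact h1.le.trans (iSup_mono h2)
end

section
/- Let R be a commutative ring and M an R-module with submodules H and K such that H, K, and H + K are all multiplication modules. Then H ∩ K is a multiplication module. -/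
section Aux

variable {R : Type*} [CommRing R] {M : Type*} [AddCommGroup M] [Module R M]

lemma ideal_smul_comm (I J : Ideal R) (N : Submodule R M) :
    I • (J • N) = J • (I • N) := by
  rw [← Submodule.smul_assoc, ← Submodule.smul_assoc]
  congr 1
  exact mul_comm I J

/-- If `P` is a multiplication module, then every submodule `X ≤ P` of `M`
has the form `I • P`. -/
lemma exists_ideal_smul_of_le (P : Submodule R M) (hP : IsMultiplicationModule R P)
    (X : Submodule R M) (hX : X ≤ P) : ∃ I : Ideal R, X = I • P := by
  obtain ⟨I, hI⟩ := hP (X.comap P.subtype)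
  refine ⟨I, ?_⟩
  have h1 : (X.comap P.subtype).map P.subtype = X := by
    rw [Submodule.map_comap_subtype, inf_eq_right.mpr hX]
  rw [← h1, hI, Submodule.map_smul'', Submodule.map_subtype_top]

end Aux

theorem stmt_16 (R : Type*) [CommRing R] (M : Type*) [AddCommGroup M] [Module R M]
    (H K : Submodule R M)
    (hH : IsMultiplicationModule R H) (hK : IsMultiplicationModule R K)
    (hHK : IsMultiplicationModule R ↥(H ⊔ K)) :
    IsMultiplicationModule R ↥(H ⊓ K) := by
  intro N
  obtain ⟨A, hA⟩ := exists_ideal_smul_of_le (H ⊔ K) hHK H le_sup_left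
  obtain ⟨B, hB⟩ := exists_ideal_smul_of_le (H ⊔ K) hHK K le_sup_right
  have hXP : N.map (H ⊓ K).subtype ≤ H ⊓ K := Submodule.map_subtype_le _ _
  obtain ⟨I, hI⟩ := exists_ideal_smul_of_le H hH (N.map (H ⊓ K).subtype)
    (hXP.trans inf_le_left)
  obtain ⟨J, hJ⟩ := exists_ideal_smul_of_le K hK (N.map (H ⊓ K).subtype)
    (hXP.trans inf_le_right)
  obtain ⟨C, hC⟩ := exists_ideal_smul_of_le (H ⊔ K) hHK (N.map (H ⊓ K).subtype)
    ((hXP.trans inf_le_left).trans le_sup_left)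
  -- A • K = B • H  and it is contained in H ⊓ K
  have hAK : A • K = B • H := by
    conv_lhs => rw [hB]
    conv_rhs => rw [hA]
    exact ideal_smul_comm A B (H ⊔ K)
  have hAKle : A • K ≤ H ⊓ K :=
    le_inf (by rw [hAK]; exact Submodule.smul_le_right) Submodule.smul_le_right
  have hBHle : B • H ≤ H ⊓ K := hAK ▸ hAKle
  -- (A ⊔ B) acts as identity on submodules of H ⊔ K
  have hT : (A ⊔ B) • (H ⊔ K) = H ⊔ K := by
    rw [Submodule.sup_smul, ← hA, ← hB]
  have hX2 : N.map (H ⊓ K).subtype = (A ⊔ B) • N.map (H ⊓ K).subtype := by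
    calc N.map (H ⊓ K).subtype = C • (H ⊔ K) := hC
      _ = C • ((A ⊔ B) • (H ⊔ K)) := by rw [hT]
      _ = (A ⊔ B) • (C • (H ⊔ K)) := ideal_smul_comm _ _ _
      _ = (A ⊔ B) • N.map (H ⊓ K).subtype := by rw [← hC]
  -- the key identity
  have key : N.map (H ⊓ K).subtype = (I ⊔ J) • (H ⊓ K) := by
    apply le_antisymm
    · rw [hX2, Submodule.sup_smul]
      apply sup_le
      · calc A • N.map (H ⊓ K).subtype = J • (A • K) := by rw [hJ, ideal_smul_comm]
          _ ≤ J • (H ⊓ K) := Submodule.smul_mono le_rfl hAKle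
          _ ≤ (I ⊔ J) • (H ⊓ K) := Submodule.smul_mono le_sup_right le_rfl
      · calc B • N.map (H ⊓ K).subtype = I • (B • H) := by rw [hI, ideal_smul_comm]
          _ ≤ I • (H ⊓ K) := Submodule.smul_mono le_rfl hBHle
          _ ≤ (I ⊔ J) • (H ⊓ K) := Submodule.smul_mono le_sup_left le_rfl
    · rw [Submodule.sup_smul]
      apply sup_le
      · rw [hI]; exact Submodule.smul_mono le_rfl inf_le_left
      · rw [hJ]; exact Submodule.smul_mono le_rfl inf_le_right
  -- transfer back to submodules of ↥(H ⊓ K)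
  refine ⟨I ⊔ J, Submodule.map_injective_of_injective (H ⊓ K).injective_subtype ?_⟩
  rw [key, Submodule.map_smul'', Submodule.map_subtype_top]
end

section
/- Let R be a commutative ring and M an R-module with multiplication submodules N₁ and N₂. If R = (N₁ : N₂) + (N₂ : N₁), where (N₁ : N₂) = {r ∈ R : r • N₂ ⊆ N₁} and (N₂ : N₁) = {r ∈ R : r • N₁ ⊆ N₂}, then N₁ + N₂ is a multiplication module. -/
lemma aux_mult_sub {R : Type*} [CommRing R] {M : Type*} [AddCommGroup M] [Module R M]
    (N : Submodule R M) (hN : IsMultiplicationModule R ↥N) (K : Submodule R M)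
    (hK : K ≤ N) : ∃ I : Ideal R, K = I • N := by
  obtain ⟨I, hI⟩ := hN (K.comap N.subtype)
  refine ⟨I, ?_⟩
  have h1 : K = (K.comap N.subtype).map N.subtype := by
    rw [Submodule.map_comap_subtype]
    exact (inf_eq_right.mpr hK).symm
  rw [h1, hI, Submodule.map_smul'', Submodule.map_subtype_top]

theorem stmt_17 (R : Type*) [CommRing R] (M : Type*) [AddCommGroup M] [Module R M]
    (N₁ N₂ : Submodule R M)
    (h₁ : IsMultiplicationModule R N₁) (h₂ : IsMultiplicationModule R N₂)
    (h : N₁.colon N₂ ⊔ N₂.colon N₁ = (⊤ : Ideal R)) :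
    IsMultiplicationModule R ↥(N₁ ⊔ N₂) := by
  set S := N₁ ⊔ N₂ with hS
  have hmem : (1 : R) ∈ N₁.colon N₂ ⊔ N₂.colon N₁ := by rw [h]; trivial
  obtain ⟨a, ha, b, hb, hab⟩ := Submodule.mem_sup.mp hmem
  -- a • S ⊆ N₁
  have haS : ∀ s ∈ S, a • s ∈ N₁ := by
    intro s hs
    obtain ⟨y, hy, z, hz, rfl⟩ := Submodule.mem_sup.mp hs
    rw [smul_add]
    exact N₁.add_mem (N₁.smul_mem a hy) (Submodule.mem_colon.mp ha z hz)
  have hbS : ∀ s ∈ S, b • s ∈ N₂ := by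
    intro s hs
    obtain ⟨y, hy, z, hz, rfl⟩ := Submodule.mem_sup.mp hs
    rw [smul_add]
    exact N₂.add_mem (Submodule.mem_colon.mp hb y hy) (N₂.smul_mem b hz)
  intro P
  set K := P.map S.subtype with hKdef
  have hK : K ≤ S := Submodule.map_subtype_le S P
  obtain ⟨I₁, hI₁⟩ := aux_mult_sub N₁ h₁ (K ⊓ N₁) inf_le_right
  obtain ⟨I₂, hI₂⟩ := aux_mult_sub N₂ h₂ (K ⊓ N₂) inf_le_right
  set I := K.colon S with hIdef
  -- key step: for y ∈ I₁ • N₁, a • y ∈ I • S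
  have step1 : ∀ y ∈ I₁ • N₁, a • y ∈ I • S := by
    intro y hy
    refine Submodule.smul_induction_on hy ?_ ?_
    · intro r hr n hn
      rw [smul_smul, mul_comm]
      have hra : r * a ∈ I := by
        rw [hIdef, Submodule.mem_colon]
        intro s hs
        rw [mul_smul]
        have : r • (a • s) ∈ I₁ • N₁ := Submodule.smul_mem_smul hr (haS s hs)
        rw [← hI₁] at this
        exact this.1
      exact Submodule.smul_mem_smul hra (le_sup_left (a := N₁) (b := N₂) hn)
    · intro x y hx hy
      rw [smul_add]
      exact Submodule.add_mem _ hx hy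
  have step2 : ∀ y ∈ I₂ • N₂, b • y ∈ I • S := by
    intro y hy
    refine Submodule.smul_induction_on hy ?_ ?_
    · intro r hr n hn
      rw [smul_smul, mul_comm]
      have hrb : r * b ∈ I := by
        rw [hIdef, Submodule.mem_colon]
        intro s hs
        rw [mul_smul]
        have : r • (b • s) ∈ I₂ • N₂ := Submodule.smul_mem_smul hr (hbS s hs)
        rw [← hI₂] at this
        exact this.1
      exact Submodule.smul_mem_smul hrb (le_sup_right (a := N₁) (b := N₂) hn)
    · intro x y hx hy
      rw [smul_add]
      exact Submodule.add_mem _ hx hy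
  have hKI : K = I • S := by
    apply le_antisymm
    · intro x hx
      have hxS : x ∈ S := hK hx
      have hax : a • x ∈ I₁ • N₁ := by
        rw [← hI₁]
        exact ⟨K.smul_mem a hx, haS x hxS⟩
      have hbx : b • x ∈ I₂ • N₂ := by
        rw [← hI₂]
        exact ⟨K.smul_mem b hx, hbS x hxS⟩
      have h1 : (a * a) • x ∈ I • S := by
        have := step1 (a • x) hax
        rwa [smul_smul] at this
      have h2 : (b * b) • x ∈ I • S := by
        have := step2 (b • x) hbx
        rwa [smul_smul] at this
      have hone : (a + 3 * b) * (a * a) + (b + 3 * a) * (b * b) = 1 := by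
        have : (a + 3 * b) * (a * a) + (b + 3 * a) * (b * b) = (a + b) ^ 3 := by ring
        rw [this, hab, one_pow]
      have hx' : x = (a + 3 * b) • ((a * a) • x) + (b + 3 * a) • ((b * b) • x) := by
        rw [smul_smul, smul_smul, ← add_smul, hone, one_smul]
      rw [hx']
      exact Submodule.add_mem _ (Submodule.smul_mem _ _ h1) (Submodule.smul_mem _ _ h2)
    · refine Submodule.smul_le.mpr ?_
      intro r hr n hn
      exact Submodule.mem_colon.mp hr n hn
  refine ⟨I, ?_⟩
  have hinj := Submodule.injective_subtype S
  have hPK : P = K.comap S.subtype := by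
    rw [hKdef, Submodule.comap_map_eq_of_injective hinj]
  have hmap : I • S = (I • (⊤ : Submodule R ↥S)).map S.subtype := by
    rw [Submodule.map_smul'', Submodule.map_subtype_top]
  rw [hPK, hKI, hmap, Submodule.comap_map_eq_of_injective hinj]
end

section
/- Let R be a commutative ring and M an R-module with submodules L, N₁, …, N_t such that L, each N_i, each L + N_i, and N = ⋂_{i=1}^t N_i are multiplication modules. Then L + N is a multiplication module. -/
namespace Submodule

variable {R : Type*} [CommRing R] {M : Type*} [AddCommGroup M] [Module R M]

def IsMultiplication (X : Submodule R M) : Prop :=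
  ∀ K ≤ X, ∃ I : Ideal R, K = I • X

/- `P`-torsion and `P`-cyclic in the sense of El-Bast–Smith, with `1 - p` (`p ∈ P`) replaced by an
arbitrary `s ∉ P`; for maximal `P` the two versions agree. -/
def IsTorsionAt (P : Ideal R) (X : Submodule R M) : Prop :=
  ∀ x ∈ X, ∃ s ∉ P, s • x = 0

def IsCyclicAt (P : Ideal R) (X : Submodule R M) : Prop :=
  ∃ w ∈ X, ¬ (R ∙ w).colon X ≤ P

theorem isMultiplicationModule_iff (X : Submodule R M) :
    IsMultiplicationModule R X ↔ X.IsMultiplication := by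
  constructor
  · intro h K hK
    obtain ⟨I, hI⟩ := h (K.comap X.subtype)
    refine ⟨I, ?_⟩
    have := congrArg (map X.subtype) hI
    rwa [map_comap_subtype, inf_eq_right.2 hK, map_smul'', map_subtype_top] at this
  · intro h K
    obtain ⟨I, hI⟩ := h (K.map X.subtype) (map_subtype_le X K)
    refine ⟨I, map_injective_of_injective X.injective_subtype ?_⟩
    rw [hI, map_smul'', map_subtype_top]

theorem colon_smul_le (K X : Submodule R M) : K.colon X • X ≤ K :=
  smul_le.2 fun _ hr _ hn => mem_colon.1 hr _ hn

theorem IsMultiplication.eq_colon_smul {X K : Submodule R M} (h : X.IsMultiplication)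
    (hK : K ≤ X) : K = K.colon X • X := by
  obtain ⟨I, rfl⟩ := h K hK
  exact le_antisymm (smul_mono_left fun r hr => mem_colon.2 fun _ hx => smul_mem_smul hr hx)
    (colon_smul_le _ X)

theorem isMultiplication_of_forall_mem_colon_smul {X : Submodule R M}
    (h : ∀ x ∈ X, x ∈ (R ∙ x).colon X • X) : X.IsMultiplication := by
  intro K hK
  refine ⟨K.colon X, le_antisymm (fun k hk => ?_) (colon_smul_le K X)⟩
  have hcolon : (R ∙ k).colon X ≤ K.colon X :=
    colon_mono ((span_singleton_le_iff_mem k K).2 hk) subset_rfl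
  exact smul_mono_left hcolon (h k (hK hk))

theorem IsTorsionAt.mono {P : Ideal R} {X Y : Submodule R M} (hXY : X ≤ Y)
    (hY : IsTorsionAt P Y) : IsTorsionAt P X :=
  fun x hx => hY x (hXY hx)

theorem IsTorsionAt.of_colon_not_le {P : Ideal R} [P.IsPrime] {X Z : Submodule R M}
    (hZX : ¬ Z.colon X ≤ P) (hZ : IsTorsionAt P Z) : IsTorsionAt P X := by
  obtain ⟨a, haZ, haP⟩ := SetLike.not_le_iff_exists.1 hZX
  intro x hx
  obtain ⟨s, hsP, hs⟩ := hZ _ (mem_colon.1 haZ x hx)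
  exact ⟨s * a, Ideal.IsPrime.mul_notMem ‹_› hsP haP, by rw [mul_smul, hs]⟩

theorem IsCyclicAt.of_colon_not_le {P : Ideal R} [P.IsPrime] {X Z : Submodule R M}
    (hZle : Z ≤ X) (hZX : ¬ Z.colon X ≤ P) (hZ : IsCyclicAt P Z) : IsCyclicAt P X := by
  obtain ⟨a, haZ, haP⟩ := SetLike.not_le_iff_exists.1 hZX
  obtain ⟨w, hw, hwZ⟩ := hZ
  obtain ⟨b, hbw, hbP⟩ := SetLike.not_le_iff_exists.1 hwZ
  refine ⟨w, hZle hw, fun hle => Ideal.IsPrime.mul_notMem ‹_› hbP haP (hle ?_)⟩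
  exact mem_colon.2 fun x hx => by
    rw [mul_smul]; exact mem_colon.1 hbw _ (mem_colon.1 haZ x hx)

theorem isTorsionAt_or_isCyclicAt_of_colon_not_le {P : Ideal R} [P.IsPrime]
    {X Z : Submodule R M} (hZle : Z ≤ X) (hZX : ¬ Z.colon X ≤ P)
    (hZ : IsTorsionAt P Z ∨ IsCyclicAt P Z) : IsTorsionAt P X ∨ IsCyclicAt P X :=
  hZ.imp (·.of_colon_not_le hZX) (·.of_colon_not_le hZle hZX)

theorem IsCyclicAt.isTorsionAt_of_le_smul {P I : Ideal R} [P.IsPrime] {X : Submodule R M}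
    (hX : IsCyclicAt P X) (hXI : X ≤ I • X) (hIP : I ≤ P) : IsTorsionAt P X := by
  obtain ⟨w, hw, hwX⟩ := hX
  obtain ⟨s, hsw, hsP⟩ := SetLike.not_le_iff_exists.1 hwX
  have hsX : I • X ≤ (I • (R ∙ w)).comap (s • LinearMap.id) := smul_le.2 fun i hi x hx => by
    rw [mem_comap, LinearMap.smul_apply, LinearMap.id_apply, smul_comm]
    exact smul_mem_smul hi (mem_colon.1 hsw x hx)
  have hswI : s • w ∈ I • (R ∙ w) := by simpa using hsX (hXI hw)
  obtain ⟨e, heI, hew⟩ := mem_smul_span_singleton.1 hswI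
  -- `s w = e w` with `e ∈ I ≤ P`, so the generator `w` is killed by `s - e ∉ P`
  have htw : (s - e) • w = 0 := by rw [sub_smul, hew, sub_self]
  have htP : s - e ∉ P := fun h => hsP (by simpa using add_mem h (hIP heI))
  intro y hy
  obtain ⟨c, hc⟩ := mem_span_singleton.1 (mem_colon.1 hsw y hy)
  refine ⟨(s - e) * s, Ideal.IsPrime.mul_notMem ‹_› htP hsP, ?_⟩
  rw [mul_smul, ← hc, smul_comm, htw, smul_zero]

theorem IsMultiplication.isTorsionAt_or_isCyclicAt {P : Ideal R} (hP : P ≠ ⊤)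
    {X : Submodule R M} (hX : X.IsMultiplication) : IsTorsionAt P X ∨ IsCyclicAt P X := by
  by_cases hcyc : IsCyclicAt P X
  · exact Or.inr hcyc
  left
  simp only [IsCyclicAt, not_exists, not_and, not_not] at hcyc
  have hXP : X ≤ P • X := fun y hy => by
    have hy' : y ∈ (R ∙ y).colon X • X :=
      hX.eq_colon_smul ((span_singleton_le_iff_mem y X).2 hy) ▸ mem_span_singleton_self y
    exact smul_mono_left (hcyc y hy) hy'
  intro y hy
  have hyP : (R ∙ y) ≤ P • (R ∙ y) := by
    set C := (R ∙ y).colon X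
    have hy' : (R ∙ y) = C • X := hX.eq_colon_smul ((span_singleton_le_iff_mem y X).2 hy)
    calc (R ∙ y) = C • X := hy'
      _ ≤ C • P • X := smul_mono_right C hXP
      _ = P • C • X := by
        rw [← Submodule.smul_assoc, ← Submodule.smul_assoc, Ideal.smul_eq_mul,
          Ideal.smul_eq_mul, mul_comm]
      _ = P • (R ∙ y) := by rw [← hy']
  obtain ⟨r, hr1, hr⟩ := exists_sub_one_mem_and_smul_eq_zero_of_fg_of_le_smul P _
    (fg_span_singleton y) hyP
  refine ⟨r, fun hrP => hP ((Ideal.eq_top_iff_one P).2 ?_), hr y (mem_span_singleton_self y)⟩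
  simpa using sub_mem hrP hr1

/- `x ∈ (R x : X) X` because the ideal `{r | r x ∈ (R x : X) X}` lies in no maximal ideal. -/
theorem isMultiplication_of_forall_isMaximal {X : Submodule R M}
    (h : ∀ P : Ideal R, P.IsMaximal → IsTorsionAt P X ∨ IsCyclicAt P X) :
    X.IsMultiplication := by
  refine isMultiplication_of_forall_mem_colon_smul fun x hx => ?_
  set D := (R ∙ x).colon X
  suffices hJ : (D • X).colon {x} = ⊤ by simpa using hJ
  by_contra hJ
  obtain ⟨P, hP, hJP⟩ := Ideal.exists_le_maximal _ hJ
  rcases h P hP with htor | ⟨w, hw, hwX⟩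
  · obtain ⟨s, hsP, hs⟩ := htor x hx
    exact hsP (hJP (mem_colon_singleton.2 (hs ▸ zero_mem _)))
  · obtain ⟨a, haw, haP⟩ := SetLike.not_le_iff_exists.1 hwX
    obtain ⟨c, hc⟩ := mem_span_singleton.1 (mem_colon.1 haw x hx)
    have hcaD : c * a ∈ D := mem_colon.2 fun y hy => by
      obtain ⟨d, hd⟩ := mem_span_singleton.1 (mem_colon.1 haw y hy)
      rw [mul_smul, ← hd, smul_comm, hc]
      exact smul_mem _ _ (smul_mem _ _ (mem_span_singleton_self x))
    have haa : a * a ∈ (D • X).colon {x} := mem_colon_singleton.2 <| by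
      rw [mul_smul, ← hc, smul_smul, mul_comm]
      exact smul_mem_smul hcaD hw
    exact Ideal.IsPrime.mul_notMem hP.isPrime haP haP (hJP haa)

theorem IsMultiplication.isTorsionAt_or_colon_sup_not_le {P : Ideal R} [hP : P.IsPrime]
    {A B : Submodule R M} (h : (A ⊔ B).IsMultiplication) :
    IsTorsionAt P (A ⊔ B) ∨ ¬ A.colon ↑(A ⊔ B) ≤ P ∨ ¬ B.colon ↑(A ⊔ B) ≤ P := by
  by_cases hA : A.colon ↑(A ⊔ B) ≤ P
  · by_cases hB : B.colon ↑(A ⊔ B) ≤ P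
    · have hsup : A ⊔ B ≤ (A.colon ↑(A ⊔ B) ⊔ B.colon ↑(A ⊔ B)) • (A ⊔ B) := by
        rw [sup_smul, ← h.eq_colon_smul le_sup_left, ← h.eq_colon_smul le_sup_right]
      exact Or.inl <| (h.isTorsionAt_or_isCyclicAt hP.ne_top).elim id
        (·.isTorsionAt_of_le_smul hsup (sup_le hA hB))
    · exact Or.inr (Or.inr hB)
  · exact Or.inr (Or.inl hA)

end Submodule

open Submodule in
theorem stmt_18_general (R : Type*) [CommRing R] (M : Type*) [AddCommGroup M] [Module R M]
    (L : Submodule R M) {t : ℕ} (N : Fin t → Submodule R M)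
    (hL : IsMultiplicationModule R L)
    (hLN : ∀ i, IsMultiplicationModule R ↥(L ⊔ N i))
    (hInt : IsMultiplicationModule R ↥(⨅ i, N i)) :
    IsMultiplicationModule R ↥(L ⊔ ⨅ i, N i) := by
  simp only [isMultiplicationModule_iff] at hL hLN hInt ⊢
  have hle : ∀ i, L ⊔ ⨅ i, N i ≤ L ⊔ N i := fun i => sup_le_sup_left (iInf_le N i) L
  refine isMultiplication_of_forall_isMaximal fun P hP => ?_
  by_cases htor : ∃ i, IsTorsionAt P (L ⊔ N i)
  · obtain ⟨i, hi⟩ := htor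
    exact Or.inl (hi.mono (hle i))
  by_cases hLi : ∃ i, ¬ L.colon ↑(L ⊔ N i) ≤ P
  · obtain ⟨i, hi⟩ := hLi
    exact isTorsionAt_or_isCyclicAt_of_colon_not_le le_sup_left
      (fun h => hi ((colon_mono le_rfl (hle i)).trans h)) (hL.isTorsionAt_or_isCyclicAt hP.ne_top)
  simp only [not_exists, not_not] at htor hLi
  have hNi : ∀ i, ¬ (N i).colon ↑(L ⊔ ⨅ i, N i) ≤ P := fun i h =>
    (((hLN i).isTorsionAt_or_colon_sup_not_le.resolve_left (htor i)).resolve_left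
      (not_not.2 (hLi i))) ((colon_mono le_rfl (hle i)).trans h)
  have hInf : ¬ (⨅ i, N i).colon ↑(L ⊔ ⨅ i, N i) ≤ P := by
    rw [iInf_colon, ← Finset.inf_univ_eq_iInf, hP.isPrime.inf_le']
    simpa using hNi
  exact isTorsionAt_or_isCyclicAt_of_colon_not_le le_sup_right hInf
    (hInt.isTorsionAt_or_isCyclicAt hP.ne_top)

theorem stmt_18 (R : Type*) [CommRing R] (M : Type*) [AddCommGroup M] [Module R M]
    (L : Submodule R M) {t : ℕ} (N : Fin t → Submodule R M)
    (hL : IsMultiplicationModule R L)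
    (hN : ∀ i, IsMultiplicationModule R (N i))
    (hLN : ∀ i, IsMultiplicationModule R ↥(L ⊔ N i))
    (hInt : IsMultiplicationModule R ↥(⨅ i, N i)) :
    IsMultiplicationModule R ↥(L ⊔ ⨅ i, N i) :=
  stmt_18_general R M L N hL hLN hInt
end
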